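/- arXiv:2310.04439 — 6 statements merged into one kernel-verified Lean document; each statement's English description precedes it below -/
import Mathlib

section
/- For all odd N = 2n-1 with n ≥ 1, and for all i with 0 ≤ i ≤ n-1, letting j = min(i, N-i), we have F_{N-i}^2 + F_i^2 = F_{N-(2j+1)} · F_{N+1} + F_{2j+1}, where F denotes the Fibonacci sequence. -/
open Nat

lemma cassini_even (b : ℕ) :
    Nat.fib (2 * b + 1) ^ 2 = Nat.fib (2 * b) * Nat.fib (2 * b + 2) + 1 := by
  induction b with
  | zero => simp
  | succ b ih =>
    have h1 : 2 * (b + 1) = 2 * b + 2 := by ring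
    rw [h1]
    have e1 : Nat.fib (2 * b + 2) = Nat.fib (2 * b) + Nat.fib (2 * b + 1) :=
      Nat.fib_add_two
    have e2 : Nat.fib (2 * b + 3) = Nat.fib (2 * b + 1) + Nat.fib (2 * b + 2) :=
      Nat.fib_add_two
    have e3 : Nat.fib (2 * b + 4) = Nat.fib (2 * b + 2) + Nat.fib (2 * b + 3) :=
      Nat.fib_add_two
    zify at ih ⊢
    rw [e2, e3, e2, e1] at *
    push_cast at *
    nlinarith [ih]

lemma key (b i : ℕ) :
    Nat.fib (2 * b + i + 1) ^ 2 + Nat.fib i ^ 2 =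
      Nat.fib (2 * b) * Nat.fib (2 * b + (2 * i + 1) + 1) + Nat.fib (2 * i + 1) := by
  have h1 := Nat.fib_add (2 * b) i
  have h2 := Nat.fib_add (2 * b) (2 * i + 1)
  have h3 : Nat.fib (2 * i + 1) = Nat.fib i ^ 2 + Nat.fib (i + 1) ^ 2 := by
    have := Nat.fib_add i i
    rw [show i + i + 1 = 2 * i + 1 by ring] at this
    nlinarith [this]
  have h4 : Nat.fib (2 * i + 2) = Nat.fib i * Nat.fib (i + 1) + Nat.fib (i + 1) * Nat.fib (i + 2) := by
    have := Nat.fib_add i (i + 1)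
    rw [show i + (i + 1) + 1 = 2 * i + 2 by ring] at this
    linarith [this]
  have h5 := cassini_even b
  have h6 : Nat.fib (2 * b + 2) = Nat.fib (2 * b) + Nat.fib (2 * b + 1) := Nat.fib_add_two
  have h7 : Nat.fib (i + 2) = Nat.fib i + Nat.fib (i + 1) := Nat.fib_add_two
  rw [show 2 * b + i + 1 = 2 * b + i + 1 from rfl, h1, h2,
    show 2 * i + 1 + 1 = 2 * i + 2 from rfl, h3, h4, h7]
  zify at *
  rw [h6] at h5
  linear_combination ((Nat.fib (i + 1) : ℤ)) ^ 2 * h5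

theorem fib_cycle_type_I (n : ℕ) (hn : 1 ≤ n) (N : ℕ) (hN : N = 2 * n - 1)
    (i : ℕ) (hi : i ≤ n - 1) :
    Nat.fib (N - i) ^ 2 + Nat.fib i ^ 2 =
      Nat.fib (N - (2 * min i (N - i) + 1)) * Nat.fib (N + 1) +
        Nat.fib (2 * min i (N - i) + 1) := by
  have hmin : min i (N - i) = i := by
    apply min_eq_left; omega
  rw [hmin]
  have e1 : N - i = 2 * (n - 1 - i) + i + 1 := by omega
  have e2 : N - (2 * i + 1) = 2 * (n - 1 - i) := by omega
  have e3 : N + 1 = 2 * (n - 1 - i) + (2 * i + 1) + 1 := by omega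
  rw [e1, e2, e3]
  exact key (n - 1 - i) i
end

section
/- For all odd N = 2n+1 with n ≥ 1, and for all i with 1 ≤ i ≤ n+1, letting j = min(i, N-i), we have F_{N-i}^2 + F_i^2 = F_{N-(2j-1)} · F_{N-1} + F_{2j-1}, where F denotes the Fibonacci sequence. -/
lemma cassini (m : ℕ) :
    (Nat.fib m : ℤ) * Nat.fib (m + 2) = (Nat.fib (m + 1) : ℤ) ^ 2 + (-1) ^ (m + 1) := by
  induction m with
  | zero => simp
  | succ k ih =>
    have h1 : (Nat.fib (k + 3) : ℤ) = Nat.fib (k + 1) + Nat.fib (k + 2) := by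
      have := Nat.fib_add_two (n := k + 1); push_cast [this]; ring
    have h2 : (Nat.fib (k + 2) : ℤ) = Nat.fib k + Nat.fib (k + 1) := by
      have := Nat.fib_add_two (n := k); push_cast [this]; ring
    have hp : ((-1 : ℤ)) ^ (k + 2) = -(-1) ^ (k + 1) := by ring
    calc (Nat.fib (k + 1) : ℤ) * Nat.fib (k + 1 + 2)
        = (Nat.fib (k + 1) : ℤ) ^ 2 + Nat.fib (k + 1) * Nat.fib (k + 2) := by
          rw [show k + 1 + 2 = k + 3 from rfl, h1]; ring
      _ = (Nat.fib (k + 1 + 1) : ℤ) ^ 2 + (-1) ^ (k + 1 + 1) := by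
          rw [show ((Nat.fib (k + 1 + 1) : ℤ)) ^ 2 = Nat.fib (k + 2) * Nat.fib (k + 2) from by ring,
            h2]
          nlinarith [ih]

lemma catalan_even (t s : ℕ) :
    Nat.fib (2 * t) * Nat.fib (2 * t + 2 * s) + Nat.fib s ^ 2 = Nat.fib (2 * t + s) ^ 2 := by
  rcases Nat.eq_zero_or_pos t with ht | ht
  · simp [ht]
  rcases Nat.eq_zero_or_pos s with hs | hs
  · simp [hs, sq]
  have key : ((Nat.fib (2 * t) : ℤ)) * Nat.fib (2 * t + 2 * s) + (Nat.fib s : ℤ) ^ 2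
      = (Nat.fib (2 * t + s) : ℤ) ^ 2 := by
    obtain ⟨t', rfl⟩ : ∃ t', t = t' + 1 := ⟨t - 1, by omega⟩
    obtain ⟨s', rfl⟩ : ∃ s', s = s' + 1 := ⟨s - 1, by omega⟩
    set a : ℤ := (Nat.fib (2 * t' + 1) : ℤ) with ha
    set b : ℤ := (Nat.fib (2 * t' + 2) : ℤ) with hb
    set p : ℤ := (Nat.fib (s' + 1) : ℤ) with hp
    set q : ℤ := (Nat.fib (s' + 2) : ℤ) with hq
    have hfs : (Nat.fib s' : ℤ) = q - p := by
      have := Nat.fib_add_two (n := s'); push_cast [this, hp, hq]; ring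
    have h1 : (Nat.fib (2 * (t' + 1) + (s' + 1)) : ℤ) = a * p + b * q := by
      have h := Nat.fib_add (2 * t' + 1) (s' + 1)
      rw [show 2 * (t' + 1) + (s' + 1) = 2 * t' + 1 + (s' + 1) + 1 by ring, h]
      push_cast
      rw [show 2 * t' + 1 + 1 = 2 * t' + 2 by ring, show s' + 1 + 1 = s' + 2 by ring]
    have h3 : (Nat.fib (2 * s' + 2) : ℤ) = 2 * p * q - p ^ 2 := by
      have h := Nat.fib_add s' (s' + 1)
      rw [show 2 * s' + 2 = s' + (s' + 1) + 1 by ring, h]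
      push_cast
      rw [show s' + 1 + 1 = s' + 2 by ring]
      rw [hfs]; ring
    have h4 : (Nat.fib (2 * s' + 3) : ℤ) = q ^ 2 + p ^ 2 := by
      have h := Nat.fib_two_mul_add_one (s' + 1)
      rw [show 2 * s' + 3 = 2 * (s' + 1) + 1 by ring, h]
      push_cast
      rw [show s' + 1 + 1 = s' + 2 from rfl]
    have h2 : (Nat.fib (2 * (t' + 1) + 2 * (s' + 1)) : ℤ)
        = a * (2 * p * q - p ^ 2) + b * (q ^ 2 + p ^ 2) := by
      have h := Nat.fib_add (2 * t' + 1) (2 * s' + 2)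
      rw [show 2 * (t' + 1) + 2 * (s' + 1) = 2 * t' + 1 + (2 * s' + 2) + 1 by ring, h]
      push_cast
      rw [show 2 * t' + 1 + 1 = 2 * t' + 2 by ring, show 2 * s' + 2 + 1 = 2 * s' + 3 by ring]
      rw [h3, h4]
    have hcas : a * (a + b) = b ^ 2 + 1 := by
      have h := cassini (2 * t' + 1)
      have hab : a + b = (Nat.fib (2 * t' + 3) : ℤ) := by
        have h2 := Nat.fib_add_two (n := 2 * t' + 1)
        rw [show 2 * t' + 1 + 2 = 2 * t' + 3 by ring, show 2 * t' + 1 + 1 = 2 * t' + 2 by ring]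
          at h2
        push_cast [h2, ha, hb]; ring
      rw [hab]
      rw [show 2 * t' + 1 + 2 = 2 * t' + 3 by ring, show 2 * t' + 1 + 1 = 2 * t' + 2 by ring]
        at h
      rw [h]
      have : ((-1 : ℤ)) ^ (2 * t' + 2) = 1 := by
        rw [show 2 * t' + 2 = 2 * (t' + 1) by ring, pow_mul]; norm_num
      rw [this]
    have h0 : (Nat.fib (2 * (t' + 1)) : ℤ) = b := by
      rw [hb, show 2 * (t' + 1) = 2 * t' + 2 by ring]
    rw [h0, h1, h2]
    nlinarith [hcas]
  exact_mod_cast key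

theorem fib_cycle_type_II (n : ℕ) (hn : 1 ≤ n) (N : ℕ) (hN : N = 2 * n + 1)
    (i : ℕ) (hi1 : 1 ≤ i) (hi2 : i ≤ n + 1) :
    Nat.fib (N - i) ^ 2 + Nat.fib i ^ 2 =
      Nat.fib (N - (2 * min i (N - i) - 1)) * Nat.fib (N - 1) +
        Nat.fib (2 * min i (N - i) - 1) := by
  subst hN
  rcases Nat.lt_or_ge i (n + 1) with hcase | hcase
  · -- i ≤ n, min = i
    have hmin : min i (2 * n + 1 - i) = i := by omega
    rw [hmin]
    have e1 : 2 * n + 1 - i = 2 * (n - i + 1) + (i - 1) := by omega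
    have e2 : 2 * n + 1 - (2 * i - 1) = 2 * (n - i + 1) := by omega
    have e3 : 2 * n + 1 - 1 = 2 * (n - i + 1) + 2 * (i - 1) := by omega
    have e4 : 2 * i - 1 = 2 * (i - 1) + 1 := by omega
    rw [e1, e2, e3, e4, Nat.fib_two_mul_add_one]
    have := catalan_even (n - i + 1) (i - 1)
    have e5 : i - 1 + 1 = i := by omega
    rw [e5] at *
    omega
  · -- i = n + 1, min = n
    have hieq : i = n + 1 := by omega
    subst hieq
    have hmin : min (n + 1) (2 * n + 1 - (n + 1)) = n := by omega
    rw [hmin]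
    have e1 : 2 * n + 1 - (n + 1) = n := by omega
    have e2 : 2 * n + 1 - (2 * n - 1) = 2 := by omega
    have e3 : 2 * n + 1 - 1 = 2 * n := by omega
    have e4 : 2 * n - 1 + 1 = 2 * n := by omega
    rw [e1, e2, e3, Nat.fib_two]
    have h5 : Nat.fib (2 * n - 1) + Nat.fib (2 * n) = Nat.fib (2 * n + 1) := by
      have := Nat.fib_add_two (n := 2 * n - 1)
      rw [e4] at this
      rw [show 2 * n - 1 + 2 = 2 * n + 1 by omega] at this
      omega
    have h6 := Nat.fib_two_mul_add_one n
    omega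
end

section
/- For every positive integer n, F_{2n}² + F_{4n+1}² = F_{2n} · F_{6n+2} + F_{4n+1}; that is, the number with base-b digits F_{2n} and F_{4n+1} is a fixed point of the sum-of-squares-of-digits map in base b = F_{6n+2}. -/
lemma cassini_int (k : ℕ) :
    (Nat.fib (k + 1) : ℤ) ^ 2 - Nat.fib (k + 1) * Nat.fib k - (Nat.fib k : ℤ) ^ 2
      = (-1) ^ k := by
  induction k with
  | zero => simp
  | succ k ih =>
    rw [Nat.fib_add_two]
    push_cast
    push_cast at ih
    ring_nf
    ring_nf at ih
    linarith

theorem fib_fixed_point_II (n : ℕ) (hn : 1 ≤ n) :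
    Nat.fib (2 * n) ^ 2 + Nat.fib (4 * n + 1) ^ 2 =
      Nat.fib (2 * n) * Nat.fib (6 * n + 2) + Nat.fib (4 * n + 1) := by
  have h1 : Nat.fib (4 * n + 1) = Nat.fib (2 * n + 1) ^ 2 + Nat.fib (2 * n) ^ 2 := by
    have := Nat.fib_two_mul_add_one (2 * n)
    rw [show 2 * (2 * n) = 4 * n by ring] at this
    exact this
  have h2 : Nat.fib (4 * n + 2) = Nat.fib (2 * n) * Nat.fib (2 * n + 1) +
      Nat.fib (2 * n + 1) * Nat.fib (2 * n + 2) := by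
    have := Nat.fib_add (2 * n) (2 * n + 1)
    rw [show 2 * n + (2 * n + 1) + 1 = 4 * n + 2 by ring] at this
    exact this
  have h3 : Nat.fib (6 * n + 2) = Nat.fib (2 * n) * Nat.fib (4 * n + 1) +
      Nat.fib (2 * n + 1) * Nat.fib (4 * n + 2) := by
    have := Nat.fib_add (2 * n) (4 * n + 1)
    rw [show 2 * n + (4 * n + 1) + 1 = 6 * n + 2 by ring] at this
    exact this
  have h4 : Nat.fib (2 * n + 2) = Nat.fib (2 * n) + Nat.fib (2 * n + 1) :=
    Nat.fib_add_two
  have hc := cassini_int (2 * n)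
  rw [show ((-1 : ℤ)) ^ (2 * n) = 1 by rw [pow_mul]; norm_num] at hc
  zify
  rw [h1, h3, h2, h4] at *
  push_cast
  nlinarith [hc, sq_nonneg ((Nat.fib (2*n) : ℤ)), sq_nonneg ((Nat.fib (2*n+1) : ℤ))]
end

section
/- For every positive integer n, (F_{2n}F_{2n-1})² + (F_{2n+1}F_{2n-1})² = (F_{2n}F_{2n-1}) · F_{4n} + F_{2n+1}F_{2n-1}; that is, the number with leading digit F_{2n}F_{2n-1} and trailing digit F_{2n+1}F_{2n-1} is a fixed point of S_b in base b = F_{4n}. -/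
lemma cassini_odd (k : ℕ) :
    Nat.fib (2*k+1)^2 + Nat.fib (2*k+1) * Nat.fib (2*k+2) = Nat.fib (2*k+2)^2 + 1 := by
  induction k with
  | zero => simp
  | succ k ih =>
    have h3 : Nat.fib (2*k+3) = Nat.fib (2*k+1) + Nat.fib (2*k+2) := Nat.fib_add_two
    have h4 : Nat.fib (2*k+4) = Nat.fib (2*k+2) + Nat.fib (2*k+3) := Nat.fib_add_two
    have e1 : 2*(k+1)+1 = 2*k+3 := by ring
    have e2 : 2*(k+1)+2 = 2*k+4 := by ring
    rw [e1, e2, h4, h3]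
    nlinarith [ih]

theorem fib_companion_b (n : ℕ) (hn : 1 ≤ n) :
    (Nat.fib (2 * n) * Nat.fib (2 * n - 1)) ^ 2 +
      (Nat.fib (2 * n + 1) * Nat.fib (2 * n - 1)) ^ 2 =
      (Nat.fib (2 * n) * Nat.fib (2 * n - 1)) * Nat.fib (4 * n) +
        Nat.fib (2 * n + 1) * Nat.fib (2 * n - 1) := by
  obtain ⟨k, rfl⟩ : ∃ k, n = k + 1 := ⟨n - 1, by omega⟩
  have e1 : 2 * (k+1) - 1 = 2*k+1 := by omega
  have e2 : 2 * (k+1) = 2*k+2 := by ring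
  have e3 : 2 * (k+1) + 1 = 2*k+3 := by ring
  have e4 : 4 * (k+1) = (2*k+1) + (2*k+2) + 1 := by ring
  have hA := Nat.fib_add (2*k+1) (2*k+2)
  rw [e1, e3, e2, e4, hA]
  have h3 : Nat.fib (2*k+3) = Nat.fib (2*k+1) + Nat.fib (2*k+2) := Nat.fib_add_two
  have h2 : Nat.fib (2*k+1+1) = Nat.fib (2*k+2) := rfl
  have h22 : Nat.fib (2*k+2+1) = Nat.fib (2*k+3) := rfl
  rw [h2, h22, h3]
  have hc := cassini_odd k
  nlinarith [hc, Nat.fib_pos.mpr (show 0 < 2*k+1 by omega)]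
end

section
/- For every positive integer n, F_{2n+1} · F_{4n-1} = F_{3n}² + F_{n-1}², where F denotes the Fibonacci sequence. -/
lemma cassini_sq (m : ℕ) :
    ((Nat.fib (m + 1) : ℤ) ^ 2 - Nat.fib m * Nat.fib (m + 1) - (Nat.fib m : ℤ) ^ 2) ^ 2 = 1 := by
  induction m with
  | zero => simp
  | succ k ih =>
    have h : (Nat.fib (k + 2) : ℤ) = Nat.fib k + Nat.fib (k + 1) := by
      rw [Nat.fib_add_two]; push_cast; ring
    rw [h]
    linear_combination ih

theorem fib_3n_identity_a (n : ℕ) (hn : 1 ≤ n) :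
    Nat.fib (2 * n + 1) * Nat.fib (4 * n - 1) =
      Nat.fib (3 * n) ^ 2 + Nat.fib (n - 1) ^ 2 := by
  obtain ⟨m, rfl⟩ := Nat.exists_eq_add_of_le hn
  have e1 : 2 * (1 + m) + 1 = 2 * (m + 1) + 1 := by ring
  have e2 : 4 * (1 + m) - 1 = 2 * (2 * m + 1) + 1 := by omega
  have e3 : 3 * (1 + m) = (m + 1) + (2 * m + 1) + 1 := by ring
  have e4 : 1 + m - 1 = m := by omega
  have h3 : Nat.fib (m + 1 + (2 * m + 1) + 1) =
      Nat.fib (m + 1) * Nat.fib (2 * m + 1) + Nat.fib (m + 2) * Nat.fib (2 * m + 2) :=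
    Nat.fib_add _ _
  rw [e1, e2, e3, e4, Nat.fib_two_mul_add_one, Nat.fib_two_mul_add_one, h3]
  have h2m1 : Nat.fib (2 * m + 1) = Nat.fib (m + 1) ^ 2 + Nat.fib m ^ 2 :=
    Nat.fib_two_mul_add_one m
  have h2m2 : Nat.fib (2 * m + 2) = Nat.fib m * Nat.fib (m + 1) + Nat.fib (m + 1) * Nat.fib (m + 2) := by
    have : 2 * m + 2 = m + (m + 1) + 1 := by ring
    rw [this, Nat.fib_add]
  have hm2 : Nat.fib (m + 2) = Nat.fib m + Nat.fib (m + 1) := Nat.fib_add_two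
  rw [h2m1, h2m2, hm2]
  have key := cassini_sq m
  zify
  set a := (Nat.fib m : ℤ)
  set b := (Nat.fib (m + 1) : ℤ)
  linear_combination (a ^ 2) * key
end

section
/- Let p_n(x) be the Pell polynomials (p_0 = 0, p_1 = 1, p_n = 2x·p_{n-1} + p_{n-2}). For odd N = 2n - 1 with n ≥ 1 and all i with 0 ≤ i ≤ n - 1, letting j = min(i, N-i), we have p_{N-i}(x)² + p_i(x)² = p_{N-(2j+1)}(x) · p_{N+1}(x) + p_{2j+1}(x) as polynomial identities. -/
open Polynomial in
noncomputable def pell : ℕ → Polynomial ℤ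
  | 0 => 0
  | 1 => 1
  | n + 2 => 2 * X * pell (n + 1) + pell n

open Polynomial

lemma pell_add (m : ℕ) : ∀ k : ℕ,
    pell (m + k + 1) = pell (m + 1) * pell (k + 1) + pell m * pell k := by
  intro k
  induction k using Nat.twoStepInduction with
  | zero => simp [pell]
  | one =>
      show pell (m + 2) = _
      simp [pell]; ring
  | more k ih1 ih2 =>
      have h : m + (k + 2) + 1 = (m + k + 1) + 2 := by ring
      rw [h, show pell ((m + k + 1) + 2) = 2 * X * pell (m + k + 2) + pell (m + k + 1) from rfl,
        show m + k + 2 = m + (k + 1) + 1 from by ring, ih2, ih1,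
        show pell (k + 1 + 2) = 2 * X * pell (k + 2) + pell (k + 1) from rfl,
        show pell (k + 2) = 2 * X * pell (k + 1) + pell k from rfl]
      ring

lemma pell_cassini : ∀ k : ℕ,
    pell (k + 1) ^ 2 - 2 * X * pell (k + 1) * pell k - pell k ^ 2 = (-1 : Polynomial ℤ) ^ k := by
  intro k
  induction k with
  | zero => simp [pell]
  | succ k ih =>
      rw [show pell (k + 2) = 2 * X * pell (k + 1) + pell k from rfl, pow_succ]
      linear_combination (-1 : Polynomial ℤ) * ih

lemma pell_key (a b : ℕ) :
    pell (a + 2 * b + 1) ^ 2 + pell a ^ 2 =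
      pell (2 * b) * pell (2 * a + 2 * b + 2) + pell (2 * a + 1) := by
  have h1 : pell (a + 2 * b + 1) = pell (a + 1) * pell (2 * b + 1) + pell a * pell (2 * b) :=
    pell_add a (2 * b)
  have h2 : pell (2 * a + 2 * b + 2)
      = pell (a + 2 * b + 2) * pell (a + 1) + pell (a + 2 * b + 1) * pell a := by
    have := pell_add (a + 2 * b + 1) a
    rw [show a + 2 * b + 1 + a + 1 = 2 * a + 2 * b + 2 from by ring,
      show a + 2 * b + 1 + 1 = a + 2 * b + 2 from rfl] at this
    exact this
  have h3 : pell (a + 2 * b + 2)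
      = pell (a + 2) * pell (2 * b + 1) + pell (a + 1) * pell (2 * b) := by
    have := pell_add (a + 1) (2 * b)
    rw [show a + 1 + 2 * b + 1 = a + 2 * b + 2 from by ring,
      show a + 1 + 1 = a + 2 from rfl] at this
    exact this
  have h4 : pell (2 * a + 1) = pell (a + 1) * pell (a + 1) + pell a * pell a := by
    have := pell_add a a
    rw [show a + a + 1 = 2 * a + 1 from by ring] at this
    exact this
  have h5 : pell (a + 2) = 2 * X * pell (a + 1) + pell a := rfl
  have h6 : pell (2 * b + 1) ^ 2 - 2 * X * pell (2 * b + 1) * pell (2 * b)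
      - pell (2 * b) ^ 2 = 1 := by
    have := pell_cassini (2 * b)
    rwa [show ((-1 : Polynomial ℤ)) ^ (2 * b) = 1 from by
      rw [pow_mul]; norm_num] at this
  rw [h2, h3, h5, h4, h1]
  linear_combination (pell (a + 1)) ^ 2 * h6

theorem pell_type_I (n : ℕ) (hn : 1 ≤ n) (N : ℕ) (hN : N = 2 * n - 1)
    (i : ℕ) (hi : i ≤ n - 1) :
    pell (N - i) ^ 2 + pell i ^ 2 =
      pell (N - (2 * min i (N - i) + 1)) * pell (N + 1) +
        pell (2 * min i (N - i) + 1) := by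
  obtain ⟨b, hb⟩ : ∃ b, n = i + b + 1 := ⟨n - 1 - i, by omega⟩
  have hmin : min i (N - i) = i := by
    apply min_eq_left; omega
  rw [hmin, show N - i = i + 2 * b + 1 from by omega,
    show N - (2 * i + 1) = 2 * b from by omega,
    show N + 1 = 2 * i + 2 * b + 2 from by omega]
  exact pell_key i b
end
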